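/- Let p be a prime and (m,n1,n2,s1,s2) an admissible tuple for p, and let G = G_p(m,n1,n2,s1,s2). Then G is generated by two elements and has nilpotency class exactly 2 (its commutator subgroup is nontrivial and contained in its center). -/

import Mathlib

/-- The set of relators for the presented group `G_p(m,n1,n2,s1,s2)` on two generators
`b1, b2`, with `a = [b2,b1] = b2⁻¹ * b1⁻¹ * b2 * b1`:
`a ^ p^m = 1`, `[b1,a] = 1`, `[b2,a] = 1`, `b1 ^ p^n1 = a ^ p^s1`, `b2 ^ p^n2 = a ^ p^s2`. -/
def pgRels (p m n1 n2 s1 s2 : ℕ) : Set (FreeGroup (Fin 2)) :=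
  let b1 : FreeGroup (Fin 2) := FreeGroup.of 0
  let b2 : FreeGroup (Fin 2) := FreeGroup.of 1
  let a : FreeGroup (Fin 2) := b2⁻¹ * b1⁻¹ * b2 * b1
  {a ^ p ^ m,
   b1⁻¹ * a⁻¹ * b1 * a,
   b2⁻¹ * a⁻¹ * b2 * a,
   b1 ^ p ^ n1 * (a ^ p ^ s1)⁻¹,
   b2 ^ p ^ n2 * (a ^ p ^ s2)⁻¹}

/-- The group `G_p(m,n1,n2,s1,s2)` given by the presentation
`⟨b1, b2 ∣ [b2,b1]^(p^m) = [b1,[b2,b1]] = [b2,[b2,b1]] = 1,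
  b1^(p^n1) = [b2,b1]^(p^s1), b2^(p^n2) = [b2,b1]^(p^s2)⟩`. -/
abbrev GG (p m n1 n2 s1 s2 : ℕ) : Type := PresentedGroup (pgRels p m n1 n2 s1 s2)

/-- A tuple `(m,n1,n2,s1,s2)` is admissible for the prime `p` if:
(A1) `0 < m` and `s1 ≤ m`, `s2 ≤ m ≤ n2 ≤ n1`;
(A2) `n1 - s1 ≥ n2 - s2` (stated without truncated subtraction);
(A3) if `p = 2` then `s1 < n1`;
(A4) either `s1 ≥ s2`, or `p = 2` and `n1 = n2 = m = s2 = s1 + 1`. -/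
def Admissible (p m n1 n2 s1 s2 : ℕ) : Prop :=
  (0 < m ∧ s1 ≤ m ∧ s2 ≤ m ∧ m ≤ n2 ∧ n2 ≤ n1) ∧
  n2 + s1 ≤ n1 + s2 ∧
  (p = 2 → s1 < n1) ∧
  (s2 ≤ s1 ∨ (p = 2 ∧ n1 = n2 ∧ n2 = m ∧ m = s2 ∧ s2 = s1 + 1))

/-!
The relations say that `a = [b2,b1]` commutes with `b1` and `b2`, hence is central, so
`G ⧸ Z(G)` is generated by two commuting elements; it is abelian and `G' ≤ Z(G)`.

For `a ≠ 1`, map `G` to a quotient of the integral Heisenberg group whose centre is reduced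
mod `p^m`: sending `b1, b2` to `X = (1,0,0)`, `Y = (0,1,0)` makes `a ↦ Z = (0,0,1)`, and it remains
to divide out the normal subgroup generated by `X^(p^n1) Z^(-p^s1)` and `Y^(p^n2) Z^(-p^s2)`.
As `m ≤ n2 ≤ n1`, these two elements are central and span the lattice
`{(i p^n1, j p^n2, -(i p^s1 + j p^s2))}`, which does not contain `Z`.
-/

open Subgroup
open scoped commutatorElement

section GroupLemmas

variable {G : Type*} [Group G]

lemma inv_mul_inv_mul_mul_eq_one_iff {g h : G} : g⁻¹ * h⁻¹ * g * h = 1 ↔ Commute g h := by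
  rw [← Commute.inv_inv_iff, ← commutatorElement_eq_one_iff_commute, commutatorElement_def,
    inv_inv, inv_inv]

lemma Subgroup.normal_of_le_center {H : Subgroup G} (h : H ≤ center G) : H.Normal :=
  ⟨fun n hn g => by rwa [mem_center_iff.mp (h hn) g, mul_inv_cancel_right]⟩

lemma mem_center_of_forall_commute {s : Set G} (hs : closure s = ⊤) {g : G}
    (h : ∀ x ∈ s, Commute x g) : g ∈ center G := by
  rw [← centralizer_univ, ← coe_top, ← hs, centralizer_closure]
  exact fun x hx => (h x hx).eq

lemma commutator_le_center_of_closure_pair {x y : G} (hxy : closure {x, y} = ⊤)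
    (hc : ⁅x, y⁆ ∈ center G) : commutator G ≤ center G := by
  rw [← Normal.quotient_commutative_iff_commutator_le]
  set π := QuotientGroup.mk' (center G)
  have hcomm : Commute (π x) (π y) := by
    rwa [← commutatorElement_eq_one_iff_commute, ← map_commutatorElement, QuotientGroup.mk'_apply,
      QuotientGroup.eq_one_iff]
  have hgen : closure {π x, π y} = ⊤ := by
    rw [← Set.image_pair, ← MonoidHom.map_closure, hxy,
      map_top_of_surjective _ (QuotientGroup.mk'_surjective _)]
  have : IsMulCommutative (closure {π x, π y}) := isMulCommutative_closure <| by
    rintro _ (rfl | rfl) _ (rfl | rfl)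
    exacts [rfl, hcomm.eq, hcomm.symm.eq, rfl]
  exact ⟨⟨fun u v => setLike_mul_comm (hgen ▸ mem_top u) (hgen ▸ mem_top v)⟩⟩

end GroupLemmas

/-- The Heisenberg group over `ℤ` with its centre reduced modulo `N`. -/
@[ext]
structure HeisMod (N : ℕ) where
  x : ℤ
  y : ℤ
  z : ZMod N

namespace HeisMod

variable {N : ℕ}

instance : Mul (HeisMod N) := ⟨fun u v => ⟨u.x + v.x, u.y + v.y, u.z + v.z + (u.y * v.x : ℤ)⟩⟩
instance : One (HeisMod N) := ⟨⟨0, 0, 0⟩⟩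
instance : Inv (HeisMod N) := ⟨fun u => ⟨-u.x, -u.y, -u.z + (u.x * u.y : ℤ)⟩⟩

@[simp] lemma mul_x (u v : HeisMod N) : (u * v).x = u.x + v.x := rfl
@[simp] lemma mul_y (u v : HeisMod N) : (u * v).y = u.y + v.y := rfl
@[simp] lemma mul_z (u v : HeisMod N) : (u * v).z = u.z + v.z + (u.y * v.x : ℤ) := rfl
@[simp] lemma inv_x (u : HeisMod N) : u⁻¹.x = -u.x := rfl
@[simp] lemma inv_y (u : HeisMod N) : u⁻¹.y = -u.y := rfl
@[simp] lemma inv_z (u : HeisMod N) : u⁻¹.z = -u.z + (u.x * u.y : ℤ) := rfl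
@[simp] lemma one_x : (1 : HeisMod N).x = 0 := rfl
@[simp] lemma one_y : (1 : HeisMod N).y = 0 := rfl
@[simp] lemma one_z : (1 : HeisMod N).z = 0 := rfl

instance : Group (HeisMod N) where
  mul_assoc u v w := by ext <;> simp <;> ring
  one_mul u := by ext <;> simp
  mul_one u := by ext <;> simp
  inv_mul_cancel u := by ext <;> simp; ring

lemma mem_center_of_dvd {u : HeisMod N} (hx : (N : ℤ) ∣ u.x) (hy : (N : ℤ) ∣ u.y) :
    u ∈ center (HeisMod N) := by
  refine mem_center_iff.mpr fun g => ?_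
  have hx' := (ZMod.intCast_zmod_eq_zero_iff_dvd _ N).mpr (hx.mul_left g.y)
  have hy' := (ZMod.intCast_zmod_eq_zero_iff_dvd _ N).mpr (hy.mul_right g.x)
  ext <;> simp [hx', hy', add_comm]

lemma mk_zero_pow (x : ℤ) (z : ZMod N) (n : ℕ) :
    (⟨x, 0, z⟩ : HeisMod N) ^ n = ⟨n * x, 0, n * z⟩ := by
  induction n with
  | zero => ext <;> simp
  | succ n ih => rw [pow_succ, ih]; ext <;> simp <;> ring

lemma zero_mk_pow (y : ℤ) (z : ZMod N) (n : ℕ) :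
    (⟨0, y, z⟩ : HeisMod N) ^ n = ⟨0, n * y, n * z⟩ := by
  induction n with
  | zero => ext <;> simp
  | succ n ih => rw [pow_succ, ih]; ext <;> simp <;> ring

def X : HeisMod N := ⟨1, 0, 0⟩
def Y : HeisMod N := ⟨0, 1, 0⟩
def Z : HeisMod N := ⟨0, 0, 1⟩

lemma inv_Y_mul_inv_X_mul_Y_mul_X : (Y⁻¹ * X⁻¹ * Y * X : HeisMod N) = Z := by
  ext <;> simp [X, Y, Z]

lemma Z_mem_center : (Z : HeisMod N) ∈ center (HeisMod N) :=
  mem_center_of_dvd (dvd_zero _) (dvd_zero _)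

lemma Z_pow_self : (Z : HeisMod N) ^ N = 1 := by
  ext <;> simp [Z, zero_mk_pow]

/-- `(i, j) ↦ (X^e₁ Z^(-c₁))^i (Y^e₂ Z^(-c₂))^j`; the cocycle term `(j e₂) (i' e₁)` of a product
vanishes because `N ∣ e₁`. -/
def latticeHom (e₁ e₂ : ℤ) (c₁ c₂ : ZMod N) (h : (N : ℤ) ∣ e₁) :
    Multiplicative (ℤ × ℤ) →* HeisMod N where
  toFun v := ⟨v.toAdd.1 * e₁, v.toAdd.2 * e₂, -(v.toAdd.1 * c₁ + v.toAdd.2 * c₂)⟩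
  map_one' := by ext <;> simp
  map_mul' v w := by
    have h0 : ((v.toAdd.2 * e₂ * (w.toAdd.1 * e₁) : ℤ) : ZMod N) = 0 :=
      (ZMod.intCast_zmod_eq_zero_iff_dvd _ N).mpr ((h.mul_left _).mul_left _)
    ext <;> simp [h0] <;> ring

lemma range_latticeHom_le_center {e₁ e₂ : ℤ} (c₁ c₂ : ZMod N) (h₁ : (N : ℤ) ∣ e₁)
    (h₂ : (N : ℤ) ∣ e₂) : (latticeHom e₁ e₂ c₁ c₂ h₁).range ≤ center (HeisMod N) := by
  rintro _ ⟨v, rfl⟩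
  exact mem_center_of_dvd (h₁.mul_left _) (h₂.mul_left _)

def powRelations (N e₁ e₂ c₁ c₂ : ℕ) : Subgroup (HeisMod N) :=
  normalClosure {X ^ e₁ * (Z ^ c₁)⁻¹, Y ^ e₂ * (Z ^ c₂)⁻¹}

instance (N e₁ e₂ c₁ c₂ : ℕ) : (powRelations N e₁ e₂ c₁ c₂).Normal := normalClosure_normal

lemma Z_notMem_powRelations {e₁ e₂ c₁ c₂ : ℕ} (hN : 1 < N) (h₁ : N ∣ e₁) (h₂ : N ∣ e₂)
    (he₁ : e₁ ≠ 0) (he₂ : e₂ ≠ 0) : Z ∉ powRelations N e₁ e₂ c₁ c₂ := by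
  have h₁' : (N : ℤ) ∣ e₁ := Int.natCast_dvd_natCast.mpr h₁
  have h₂' : (N : ℤ) ∣ e₂ := Int.natCast_dvd_natCast.mpr h₂
  set lattice := (latticeHom e₁ e₂ (c₁ : ZMod N) c₂ h₁').range
  have := normal_of_le_center (range_latticeHom_le_center (c₁ : ZMod N) c₂ h₁' h₂')
  have hle : powRelations N e₁ e₂ c₁ c₂ ≤ lattice := by
    refine normalClosure_le_normal ?_
    rintro _ (rfl | rfl)
    · exact ⟨.ofAdd (1, 0), by ext <;> simp [latticeHom, X, Z, mk_zero_pow]⟩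
    · exact ⟨.ofAdd (0, 1), by ext <;> simp [latticeHom, Y, Z, zero_mk_pow, mk_zero_pow]⟩
  intro hZ
  obtain ⟨v, hv⟩ := hle hZ
  have : Fact (1 < N) := ⟨hN⟩
  have hi : v.toAdd.1 = 0 := by simpa [latticeHom, Z, he₁] using congrArg x hv
  have hj : v.toAdd.2 = 0 := by simpa [latticeHom, Z, he₂] using congrArg y hv
  simpa [latticeHom, Z, hi, hj] using congrArg z hv

section Quotient

variable {N e₁ e₂ c₁ c₂ : ℕ}

local notation "π" => QuotientGroup.mk' (powRelations N e₁ e₂ c₁ c₂)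

lemma mk_inv_Y_mul_inv_X_mul_Y_mul_X : (π Y)⁻¹ * (π X)⁻¹ * π Y * π X = π Z := by
  simp only [← map_inv, ← map_mul, inv_Y_mul_inv_X_mul_Y_mul_X]

lemma mk_Z_pow_self : π Z ^ N = 1 := by
  rw [← map_pow, Z_pow_self, map_one]

lemma commute_mk_Z (u : HeisMod N) : Commute (π u) (π Z) :=
  Commute.map (mem_center_iff.mp Z_mem_center u) π

lemma mk_X_pow : π X ^ e₁ = π Z ^ c₁ := by
  rw [← map_pow, ← map_pow, ← mul_inv_eq_one, ← map_inv, ← map_mul, QuotientGroup.mk'_apply,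
    QuotientGroup.eq_one_iff]
  exact subset_normalClosure (Or.inl rfl)

lemma mk_Y_pow : π Y ^ e₂ = π Z ^ c₂ := by
  rw [← map_pow, ← map_pow, ← mul_inv_eq_one, ← map_inv, ← map_mul, QuotientGroup.mk'_apply,
    QuotientGroup.eq_one_iff]
  exact subset_normalClosure (Or.inr rfl)

lemma mk_Z_ne_one (hN : 1 < N) (h₁ : N ∣ e₁) (h₂ : N ∣ e₂) (he₁ : e₁ ≠ 0) (he₂ : e₂ ≠ 0) :
    π Z ≠ 1 := by
  rw [Ne, QuotientGroup.mk'_apply, QuotientGroup.eq_one_iff]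
  exact Z_notMem_powRelations hN h₁ h₂ he₁ he₂

end Quotient

end HeisMod

lemma lift_pgRels_eq_one {M : Type*} [Group M] {p m n1 n2 s1 s2 : ℕ} {x y a : M}
    (ha : y⁻¹ * x⁻¹ * y * x = a) (ha_pow : a ^ p ^ m = 1) (hxa : Commute x a)
    (hya : Commute y a) (hx : x ^ p ^ n1 = a ^ p ^ s1) (hy : y ^ p ^ n2 = a ^ p ^ s2) :
    ∀ r ∈ pgRels p m n1 n2 s1 s2, FreeGroup.lift ![x, y] r = 1 := by
  intro r hr
  simp only [pgRels, Set.mem_insert_iff, Set.mem_singleton_iff] at hr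
  rcases hr with rfl | rfl | rfl | rfl | rfl <;>
    simp only [map_mul, map_inv, map_pow, FreeGroup.lift_apply_of, Matrix.cons_val_zero,
      Matrix.cons_val_one, ha]
  · exact ha_pow
  · exact inv_mul_inv_mul_mul_eq_one_iff.mpr hxa
  · exact inv_mul_inv_mul_mul_eq_one_iff.mpr hya
  · exact mul_inv_eq_one.mpr hx
  · exact mul_inv_eq_one.mpr hy

namespace GG

variable {p m n1 n2 s1 s2 : ℕ}

def b1 : GG p m n1 n2 s1 s2 := PresentedGroup.of 0

def b2 : GG p m n1 n2 s1 s2 := PresentedGroup.of 1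

def a : GG p m n1 n2 s1 s2 := b2⁻¹ * b1⁻¹ * b2 * b1

lemma closure_b1_b2 : closure {b1, b2} = (⊤ : Subgroup (GG p m n1 n2 s1 s2)) := by
  rw [← PresentedGroup.closure_range_of]
  congr 1
  ext
  simp [Fin.exists_fin_two, b1, b2, eq_comm]

lemma commute_b1_a : Commute (b1 : GG p m n1 n2 s1 s2) a :=
  inv_mul_inv_mul_mul_eq_one_iff.mp <|
    PresentedGroup.one_of_mem (Set.mem_insert_of_mem _ (Set.mem_insert _ _))

lemma commute_b2_a : Commute (b2 : GG p m n1 n2 s1 s2) a :=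
  inv_mul_inv_mul_mul_eq_one_iff.mp <| PresentedGroup.one_of_mem <|
    Set.mem_insert_of_mem _ (Set.mem_insert_of_mem _ (Set.mem_insert _ _))

lemma a_mem_center : (a : GG p m n1 n2 s1 s2) ∈ center _ :=
  mem_center_of_forall_commute closure_b1_b2 <| by
    rintro _ (rfl | rfl)
    exacts [commute_b1_a, commute_b2_a]

lemma a_eq_commutatorElement :
    (a : GG p m n1 n2 s1 s2) = ⁅(b2 : GG p m n1 n2 s1 s2)⁻¹, b1⁻¹⁆ := by
  rw [commutatorElement_def, inv_inv, inv_inv, a]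

lemma commutator_le_center : commutator (GG p m n1 n2 s1 s2) ≤ center _ := by
  refine commutator_le_center_of_closure_pair ?_ (a_eq_commutatorElement ▸ a_mem_center)
  rw [← closure_inv, Set.inv_insert, Set.inv_singleton, inv_inv, inv_inv, Set.pair_comm,
    closure_b1_b2]

lemma a_ne_one_of_relations {M : Type*} [Group M] {x y c : M}
    (hc : y⁻¹ * x⁻¹ * y * x = c) (hc_pow : c ^ p ^ m = 1) (hxc : Commute x c)
    (hyc : Commute y c) (hx : x ^ p ^ n1 = c ^ p ^ s1) (hy : y ^ p ^ n2 = c ^ p ^ s2)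
    (hc_ne : c ≠ 1) : (a : GG p m n1 n2 s1 s2) ≠ 1 := by
  intro ha
  apply hc_ne
  have := congrArg (PresentedGroup.toGroup (lift_pgRels_eq_one hc hc_pow hxc hyc hx hy)) ha
  simpa [a, b1, b2, hc] using this

lemma a_ne_one (hp : 1 < p) (hm : 0 < m) (h₁ : m ≤ n1) (h₂ : m ≤ n2) :
    (a : GG p m n1 n2 s1 s2) ≠ 1 :=
  a_ne_one_of_relations HeisMod.mk_inv_Y_mul_inv_X_mul_Y_mul_X HeisMod.mk_Z_pow_self
    (HeisMod.commute_mk_Z _) (HeisMod.commute_mk_Z _) HeisMod.mk_X_pow HeisMod.mk_Y_pow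
    (HeisMod.mk_Z_ne_one (Nat.one_lt_pow hm.ne' hp) (pow_dvd_pow p h₁) (pow_dvd_pow p h₂)
      (pow_ne_zero _ (by omega)) (pow_ne_zero _ (by omega)))

lemma commutator_ne_bot (hp : 1 < p) (hm : 0 < m) (h₁ : m ≤ n1) (h₂ : m ≤ n2) :
    commutator (GG p m n1 n2 s1 s2) ≠ ⊥ := by
  intro h
  apply a_ne_one hp hm h₁ h₂
  rw [← mem_bot, ← h, a_eq_commutatorElement]
  exact commutator_mem_commutator (mem_top _) (mem_top _)

end GG

/-- For an admissible tuple, `G_p(m,n1,n2,s1,s2)` is generated by two elements and has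
nilpotency class exactly 2: its commutator subgroup is nontrivial and central. -/
theorem presented_group_two_generated_class_two
    (p : ℕ) (hp : p.Prime) (m n1 n2 s1 s2 : ℕ) (h : Admissible p m n1 n2 s1 s2) :
    (∃ a b : GG p m n1 n2 s1 s2, Subgroup.closure {a, b} = ⊤) ∧
    commutator (GG p m n1 n2 s1 s2) ≠ ⊥ ∧
    commutator (GG p m n1 n2 s1 s2) ≤ Subgroup.center (GG p m n1 n2 s1 s2) := by
  obtain ⟨⟨hm, -, -, hmn2, hn21⟩, -⟩ := h
  exact ⟨⟨_, _, GG.closure_b1_b2⟩, GG.commutator_ne_bot hp.one_lt hm (hmn2.trans hn21) hmn2,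
    GG.commutator_le_center⟩
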